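/- arXiv:2004.09266 — 2 statements merged into one kernel-verified Lean document; each statement's English description precedes it below -/
import Mathlib

section
/- Let N ≥ 1. Then the average over commutators in the unitary group satisfies ⟨Tr(C)⟩ = 1/N. -/
/-!
Averaging `u X u⋆` against Haar measure produces a matrix that commutes with every unitary.
Since the unitaries span all matrices, it is the scalar `(Tr X / N) • 1`. Taking `X = u⁻¹` and
averaging over `v` gives `∫ Tr (u v u⁻¹ v⁻¹) dv = Tr u · Tr u⋆ / N`; taking `X` to be the matrix
units gives `∫ Tr u · Tr u⋆ du = 1`.
-/

open MeasureTheory Matrix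

noncomputable instance (N : ℕ) : MeasurableSpace (Matrix (Fin N) (Fin N) ℂ) := borel _
instance (N : ℕ) : BorelSpace (Matrix (Fin N) (Fin N) ℂ) := ⟨rfl⟩

-- The operator norm makes square matrices a C⋆-algebra with the usual topology; this supplies
-- Bochner integrals of matrix-valued maps and the spanning of matrices by unitaries.
open scoped Matrix.Norms.L2Operator

namespace Matrix

theorem mul_single_mul_apply {l m n o α : Type*} [Fintype m] [Fintype n] [DecidableEq m]
    [DecidableEq n] [NonUnitalSemiring α] (A : Matrix l m α) (B : Matrix n o α) (i : m) (j : n)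
    (c : α) (x : l) (y : o) : (A * single i j c * B : Matrix l o α) x y = A x i * c * B j y := by
  rw [Matrix.mul_assoc, mul_apply, Finset.sum_eq_single i]
  · simp [_root_.mul_assoc]
  · intro k _ hk
    simp [hk]
  · simp

variable {n : Type*} [Fintype n] [DecidableEq n]

instance : CompactSpace (unitaryGroup n ℂ) :=
  isCompact_iff_compactSpace.mp <| Metric.isCompact_of_isClosed_isBounded isClosed_unitary <|
    isBounded_iff_forall_norm_le.2
      ⟨‖(1 : Matrix n n ℂ)‖, fun u hu => by simpa using (CStarRing.norm_mem_unitary_mul 1 hu).le⟩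

theorem exists_eq_smul_one_of_forall_unitary_commute {M : Matrix n n ℂ}
    (h : ∀ w ∈ unitaryGroup n ℂ, w * M = M * w) : ∃ c : ℂ, M = c • 1 := by
  have hspan : Submodule.span ℂ (unitaryGroup n ℂ : Set (Matrix n n ℂ)) ≤
      (Subalgebra.centralizer ℂ {M}).toSubmodule :=
    Submodule.span_le.2 fun w hw => by simpa [Set.mem_centralizer_iff] using (h w hw).symm
  have hcenter : M ∈ Subalgebra.center ℂ (Matrix n n ℂ) :=
    Subalgebra.mem_center_iff.2 fun b => by
      simpa [Subalgebra.mem_centralizer_iff, eq_comm] using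
        hspan (x := b) ((CStarAlgebra.span_unitary (Matrix n n ℂ)).ge Submodule.mem_top)
  obtain ⟨c, hc⟩ := (Algebra.IsCentral.mem_center_iff ℂ).1 hcenter
  exact ⟨c, hc.trans (Algebra.algebraMap_eq_smul_one c)⟩

section Integral

variable {X : Type*} [MeasurableSpace X] {μ : Measure X} {f : X → Matrix n n ℂ}

theorem trace_integral (hf : Integrable f μ) : (∫ x, f x ∂μ).trace = ∫ x, (f x).trace ∂μ :=
  ((traceLinearMap n ℂ ℂ).toContinuousLinearMap.integral_comp_comm hf).symm

theorem integral_apply (hf : Integrable f μ) (i j : n) : (∫ x, f x ∂μ) i j = ∫ x, f x i j ∂μ :=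
  ((entryLinearMap ℂ ℂ i j).toContinuousLinearMap.integral_comp_comm hf).symm

end Integral

namespace UnitaryGroup

variable [MeasurableSpace (unitaryGroup n ℂ)] [BorelSpace (unitaryGroup n ℂ)]
  (μ : Measure (unitaryGroup n ℂ))

noncomputable def twirl (X : Matrix n n ℂ) : Matrix n n ℂ :=
  ∫ u, (u : Matrix n n ℂ) * X * star (u : Matrix n n ℂ) ∂μ

section FiniteMeasure

variable [IsFiniteMeasure μ]

theorem integrable_conj (X : Matrix n n ℂ) :
    Integrable (fun u : unitaryGroup n ℂ => (u : Matrix n n ℂ) * X * star (u : Matrix n n ℂ)) μ :=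
  Continuous.integrable_of_hasCompactSupport (by fun_prop) (.of_compactSpace _)

theorem mul_twirl_comm [μ.IsMulLeftInvariant] (X : Matrix n n ℂ) (w : unitaryGroup n ℂ) :
    (w : Matrix n n ℂ) * twirl μ X = twirl μ X * w := by
  have hconj : ∀ u : unitaryGroup n ℂ,
      (w : Matrix n n ℂ) * (u * X * star (u : Matrix n n ℂ)) =
        ((w * u : unitaryGroup n ℂ) : Matrix n n ℂ) * X *
          star ((w * u : unitaryGroup n ℂ) : Matrix n n ℂ) * w := fun u => by
    simp [mul_assoc]
  calc (w : Matrix n n ℂ) * twirl μ X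
      = ∫ u, ((w * u : unitaryGroup n ℂ) : Matrix n n ℂ) * X *
          star ((w * u : unitaryGroup n ℂ) : Matrix n n ℂ) * w ∂μ := by
        rw [twirl, ← integral_const_mul_of_integrable (integrable_conj μ X)]
        simp only [hconj]
    _ = ∫ u, (u : Matrix n n ℂ) * X * star (u : Matrix n n ℂ) * w ∂μ :=
        integral_mul_left_eq_self
          (fun u : unitaryGroup n ℂ => (u : Matrix n n ℂ) * X * star (u : Matrix n n ℂ) * w) w
    _ = twirl μ X * w := integral_mul_const_of_integrable (integrable_conj μ X)

end FiniteMeasure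

variable [IsProbabilityMeasure μ]

theorem trace_twirl (X : Matrix n n ℂ) : (twirl μ X).trace = X.trace := by
  rw [twirl, trace_integral (integrable_conj μ X)]
  simp [trace_mul_cycle _ X]

variable [μ.IsMulLeftInvariant]

theorem twirl_eq_smul_one (X : Matrix n n ℂ) : twirl μ X = (X.trace / Fintype.card n) • 1 := by
  obtain ⟨c, hc⟩ :=
    exists_eq_smul_one_of_forall_unitary_commute fun w hw => mul_twirl_comm μ X ⟨w, hw⟩
  rcases isEmpty_or_nonempty n with _ | _
  · exact Subsingleton.elim _ _
  have htrace := trace_twirl μ X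
  rw [hc, trace_smul, trace_one, smul_eq_mul] at htrace
  rw [hc, ← htrace, mul_div_cancel_right₀ c (by simp)]

theorem integral_trace_commutator (u : unitaryGroup n ℂ) :
    ∫ v, ((u * v * u⁻¹ * v⁻¹ : unitaryGroup n ℂ) : Matrix n n ℂ).trace ∂μ =
      (u : Matrix n n ℂ).trace * (star (u : Matrix n n ℂ)).trace / Fintype.card n := by
  have hint : Integrable (fun v : unitaryGroup n ℂ =>
      (u : Matrix n n ℂ) * (v * star (u : Matrix n n ℂ) * star (v : Matrix n n ℂ))) μ :=
    Continuous.integrable_of_hasCompactSupport (by fun_prop) (.of_compactSpace _)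
  calc ∫ v, ((u * v * u⁻¹ * v⁻¹ : unitaryGroup n ℂ) : Matrix n n ℂ).trace ∂μ
      = ∫ v, ((u : Matrix n n ℂ) *
          (v * star (u : Matrix n n ℂ) * star (v : Matrix n n ℂ))).trace ∂μ := by
        simp only [UnitaryGroup.mul_val, UnitaryGroup.inv_val, mul_assoc]
    _ = ((u : Matrix n n ℂ) * twirl μ (star (u : Matrix n n ℂ))).trace := by
        rw [← trace_integral hint, twirl, integral_const_mul_of_integrable (integrable_conj μ _)]
    _ = _ := by
        rw [twirl_eq_smul_one, mul_smul_comm, mul_one, trace_smul, smul_eq_mul]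
        ring

theorem integral_trace_mul_trace_star [Nonempty n] :
    ∫ u, (u : Matrix n n ℂ).trace * (star (u : Matrix n n ℂ)).trace ∂μ = 1 := by
  have hentry : ∀ u : unitaryGroup n ℂ,
      (u : Matrix n n ℂ).trace * (star (u : Matrix n n ℂ)).trace =
        ∑ a, ∑ b, ((u : Matrix n n ℂ) * single a b 1 * star (u : Matrix n n ℂ) :
          Matrix n n ℂ) a b := by
    simp [mul_single_mul_apply, trace, Finset.sum_mul_sum]
  calc ∫ u, (u : Matrix n n ℂ).trace * (star (u : Matrix n n ℂ)).trace ∂μ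
      = ∑ a, ∑ b, twirl μ (single a b 1) a b := by
        simp_rw [hentry, twirl, integral_apply (integrable_conj μ _)]
        rw [integral_finsetSum _ fun a _ => integrable_finsetSum _ fun b _ =>
          Continuous.integrable_of_hasCompactSupport (by fun_prop) (.of_compactSpace _)]
        refine Finset.sum_congr rfl fun a _ => integral_finsetSum _ fun b _ =>
          Continuous.integrable_of_hasCompactSupport (by fun_prop) (.of_compactSpace _)
    _ = ∑ _a : n, 1 / (Fintype.card n : ℂ) := by
        refine Finset.sum_congr rfl fun a _ => ?_
        rw [Finset.sum_eq_single a (fun b _ hb => by simp [twirl_eq_smul_one, hb.symm]) (by simp)]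
        simp [twirl_eq_smul_one]
    _ = 1 := by simp

end UnitaryGroup

end Matrix

/-- ⟨Tr C⟩ over CU(N) equals 1/N. -/
theorem trace_avg_CU (N : ℕ) (hN : 1 ≤ N)
    (μ : Measure (Matrix.unitaryGroup (Fin N) ℂ))
    [μ.IsHaarMeasure] [IsProbabilityMeasure μ] :
    ∫ u, ∫ v, (((u * v * u⁻¹ * v⁻¹ : Matrix.unitaryGroup (Fin N) ℂ) :
        Matrix (Fin N) (Fin N) ℂ)).trace ∂μ ∂μ
      = 1 / (N : ℂ) := by
  have : Nonempty (Fin N) := ⟨⟨0, hN⟩⟩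
  simp_rw [Matrix.UnitaryGroup.integral_trace_commutator μ, integral_div,
    Matrix.UnitaryGroup.integral_trace_mul_trace_star μ, Fintype.card_fin]
end

section
/- Let N ≥ 1. Then the average over commutators in the orthogonal group satisfies ⟨Tr(C)⟩ = 1/N. -/
/-!
Averaging over `v` first: the sign-change and permutation matrices in `O(N)` force the second
moments `∫ v i j * v k l = δ i k * δ j l / N`, which give `∫ v, Tr (A v B vᵀ) = Tr A * Tr B / N`.
With `A = u`, `B = uᵀ` the inner integral is `(Tr u)² / N`, and the same moments give
`∫ (Tr u)² = 1`.
-/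

open MeasureTheory Matrix

noncomputable instance (N : ℕ) : MeasurableSpace (Matrix (Fin N) (Fin N) ℝ) := borel _
instance (N : ℕ) : BorelSpace (Matrix (Fin N) (Fin N) ℝ) := ⟨rfl⟩

section CompactGroup

variable {G : Type*} [Group G] [TopologicalSpace G] [IsTopologicalGroup G] [CompactSpace G]
  [MeasurableSpace G] [BorelSpace G] (μ : Measure G) [μ.IsHaarMeasure] [IsProbabilityMeasure μ]

theorem MeasureTheory.Measure.eq_of_isMulLeftInvariant_of_isProbabilityMeasure (ν : Measure G)
    [ν.IsMulLeftInvariant] [IsProbabilityMeasure ν] : ν = μ := by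
  have h := isMulInvariant_eq_smul_of_compactSpace ν μ
  have hc : haarScalarFactor ν μ = 1 := by
    have h_univ := congrArg (· Set.univ) h
    simp only [Measure.smul_apply, measure_univ, ENNReal.smul_def, smul_eq_mul, mul_one] at h_univ
    exact_mod_cast h_univ.symm
  rw [h, hc, one_smul]

instance MeasureTheory.Measure.IsHaarMeasure.isMulRightInvariant_of_isProbabilityMeasure :
    μ.IsMulRightInvariant where
  map_mul_right_eq_self g := by
    have : IsProbabilityMeasure (μ.map (· * g)) :=
      isProbabilityMeasure_map (measurable_mul_const g).aemeasurable
    exact μ.eq_of_isMulLeftInvariant_of_isProbabilityMeasure _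

end CompactGroup

theorem Continuous.integrable_of_compactSpace {X E : Type*} [TopologicalSpace X] [CompactSpace X]
    [MeasurableSpace X] [OpensMeasurableSpace X] [NormedAddCommGroup E] {μ : Measure X}
    [IsFiniteMeasureOnCompacts μ] {f : X → E} (hf : Continuous f) : Integrable f μ :=
  hf.integrable_of_hasCompactSupport (.of_compactSpace f)

namespace Matrix.orthogonalGroup

variable {n : Type*} [Fintype n] [DecidableEq n]

instance : CompactSpace (orthogonalGroup n ℝ) := by
  refine isCompact_iff_compactSpace.mp <| IsCompact.of_isClosed_subset
    (isCompact_univ_pi fun _ => isCompact_univ_pi fun _ => isCompact_Icc (a := (-1 : ℝ)) (b := 1))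
    isClosed_unitary fun A hA i _ j _ => ?_
  exact abs_le.mp (entry_norm_bound_of_unitary hA i j)

@[fun_prop]
theorem continuous_val_apply (i j : n) : Continuous fun u : orthogonalGroup n ℝ => u.1 i j :=
  continuous_subtype_val.matrix_elem i j

@[fun_prop]
theorem continuous_val_mul_mul_transpose_apply (B : Matrix n n ℝ) (i j : n) :
    Continuous fun u : orthogonalGroup n ℝ => (u.1 * B * u.1ᵀ) i j :=
  (by fun_prop : Continuous fun u : orthogonalGroup n ℝ => u.1 * B * u.1ᵀ).matrix_elem i j

def coordReflection (i : n) : orthogonalGroup n ℝ :=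
  ⟨diagonal fun a => if a = i then -1 else 1, by
    rw [mem_orthogonalGroup_iff, diagonal_transpose, diagonal_mul_diagonal, ← diagonal_one]
    congr 1
    ext a
    split_ifs <;> simp⟩

theorem coordReflection_mul_apply (i : n) (u : orthogonalGroup n ℝ) (a b : n) :
    (coordReflection i * u).1 a b = (if a = i then -1 else 1) * u.1 a b :=
  diagonal_mul _ _ _ _

theorem mul_coordReflection_apply (j : n) (u : orthogonalGroup n ℝ) (a b : n) :
    (u * coordReflection j).1 a b = u.1 a b * (if b = j then -1 else 1) :=
  mul_diagonal _ _ _ _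

def ofPerm (σ : Equiv.Perm n) : orthogonalGroup n ℝ :=
  ⟨σ.permMatrix ℝ, by
    rw [mem_orthogonalGroup_iff, transpose_permMatrix, ← permMatrix_mul, inv_mul_cancel,
      permMatrix_one]⟩

theorem ofPerm_mul_apply (σ : Equiv.Perm n) (u : orthogonalGroup n ℝ) (a b : n) :
    (ofPerm σ * u).1 a b = u.1 (σ a) b := by
  simp [ofPerm, PEquiv.toMatrix_toPEquiv_mul]

theorem sum_apply_mul_apply_self (u : orthogonalGroup n ℝ) (j : n) :
    ∑ i, u.1 i j * u.1 i j = 1 := by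
  simpa [mul_apply] using congrFun (congrFun (Unitary.coe_star_mul_self u) j) j

variable [MeasurableSpace (Matrix n n ℝ)] [BorelSpace (Matrix n n ℝ)]
  (μ : Measure (orthogonalGroup n ℝ))

theorem integral_apply_mul_apply_of_ne_left [μ.IsMulLeftInvariant] {i k : n} (h : i ≠ k)
    (j l : n) :
    ∫ u, u.1 i j * u.1 k l ∂μ = 0 := by
  have h_flip := integral_mul_left_eq_self (μ := μ) (fun u => u.1 i j * u.1 k l)
    (coordReflection i)
  simp only [coordReflection_mul_apply, if_neg h.symm, ↓reduceIte, one_mul, neg_mul,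
    integral_neg] at h_flip
  linarith

theorem integral_apply_mul_apply_of_ne_right [μ.IsMulRightInvariant] {j l : n} (h : j ≠ l)
    (i k : n) :
    ∫ u, u.1 i j * u.1 k l ∂μ = 0 := by
  have h_flip := integral_mul_right_eq_self (μ := μ) (fun u => u.1 i j * u.1 k l)
    (coordReflection j)
  simp only [mul_coordReflection_apply, if_neg h.symm, ↓reduceIte, mul_neg_one, mul_one, neg_mul,
    integral_neg] at h_flip
  linarith

variable [μ.IsHaarMeasure] [IsProbabilityMeasure μ]

theorem integral_apply_mul_apply_self (i j : n) :
    ∫ u, u.1 i j * u.1 i j ∂μ = (Fintype.card n : ℝ)⁻¹ := by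
  have h_row (k : n) : ∫ u, u.1 k j * u.1 k j ∂μ = ∫ u, u.1 i j * u.1 i j ∂μ := by
    rw [← integral_mul_left_eq_self _ (ofPerm (Equiv.swap i k))]
    simp only [ofPerm_mul_apply, Equiv.swap_apply_right]
  have h_sum : ∑ k, ∫ u, u.1 k j * u.1 k j ∂μ = 1 := by
    rw [← integral_finsetSum _ fun k _ => (by fun_prop : Continuous _).integrable_of_compactSpace]
    simp [sum_apply_mul_apply_self]
  rw [Finset.sum_congr rfl fun k _ => h_row k, Finset.sum_const, Finset.card_univ,
    nsmul_eq_mul] at h_sum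
  exact eq_inv_of_mul_eq_one_right h_sum

theorem integral_apply_mul_apply (i j k l : n) :
    ∫ u, u.1 i j * u.1 k l ∂μ = if i = k ∧ j = l then (Fintype.card n : ℝ)⁻¹ else 0 := by
  split_ifs with h
  · obtain ⟨rfl, rfl⟩ := h
    exact integral_apply_mul_apply_self μ i j
  · rcases not_and_or.mp h with hik | hjl
    exacts [integral_apply_mul_apply_of_ne_left μ hik j l,
      integral_apply_mul_apply_of_ne_right μ hjl i k]

theorem integral_mul_mul_transpose_apply (B : Matrix n n ℝ) (a b : n) :
    ∫ v, (v.1 * B * v.1ᵀ) a b ∂μ = if a = b then (Fintype.card n : ℝ)⁻¹ * trace B else 0 := by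
  simp only [mul_apply, transpose_apply, Finset.sum_mul]
  simp (disch := intros; exact (by fun_prop : Continuous _).integrable_of_compactSpace) only
    [integral_finsetSum, mul_right_comm _ (B _ _), integral_mul_const, integral_apply_mul_apply]
  simp [ite_and, Finset.sum_ite_eq', trace, Finset.mul_sum]

theorem integral_trace_mul_mul_mul_transpose (A B : Matrix n n ℝ) :
    ∫ v, trace (A * v.1 * B * v.1ᵀ) ∂μ = (Fintype.card n : ℝ)⁻¹ * (trace A * trace B) := by
  simp only [mul_assoc A, trace, diag, mul_apply (M := A)]
  simp (disch := intros; exact (by fun_prop : Continuous _).integrable_of_compactSpace) only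
    [integral_finsetSum, integral_const_mul, integral_mul_mul_transpose_apply]
  simp only [mul_ite, mul_zero, Finset.sum_ite_eq', Finset.mem_univ, if_true, trace, diag,
    ← Finset.sum_mul]
  ring

theorem integral_trace_sq [Nonempty n] : ∫ u, trace u.1 ^ 2 ∂μ = 1 := by
  simp only [trace, diag, sq, Finset.sum_mul_sum]
  simp (disch := intros; exact (by fun_prop : Continuous _).integrable_of_compactSpace) only
    [integral_finsetSum, integral_apply_mul_apply]
  simp

end Matrix.orthogonalGroup

/-- ⟨Tr C⟩ over CO(N) equals 1/N. -/
theorem trace_avg_CO (N : ℕ) (hN : 1 ≤ N)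
    (μ : Measure (Matrix.orthogonalGroup (Fin N) ℝ))
    [μ.IsHaarMeasure] [IsProbabilityMeasure μ] :
    ∫ u, ∫ v, (((u * v * u⁻¹ * v⁻¹ : Matrix.orthogonalGroup (Fin N) ℝ) :
        Matrix (Fin N) (Fin N) ℝ)).trace ∂μ ∂μ
      = 1 / (N : ℝ) := by
  have : Nonempty (Fin N) := ⟨⟨0, hN⟩⟩
  have h_inner (u : orthogonalGroup (Fin N) ℝ) :
      ∫ v, ((u * v * u⁻¹ * v⁻¹ : orthogonalGroup (Fin N) ℝ) : Matrix (Fin N) (Fin N) ℝ).trace ∂μ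
        = (N : ℝ)⁻¹ * trace u.1 ^ 2 := by
    simpa [star_eq_conjTranspose, trace_transpose, sq] using
      orthogonalGroup.integral_trace_mul_mul_mul_transpose μ u.1 u.1ᵀ
  simp_rw [h_inner, integral_const_mul, orthogonalGroup.integral_trace_sq, mul_one, one_div]
end
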